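/- arXiv:2605.01044 — 6 statements merged into one kernel-verified Lean document; each statement's English description precedes it below -/
import Mathlib

section
/- Let X be a finite set with |X| ≥ 3 and let N be a stack-free arboreal network on X (N ∈ A(X)). If N is banyan, then the set R(N) of triplets induced by N is empty. -/
/-!
Common definitions for formalizing arboreal networks.

A (multi-rooted) network is modelled as a `PreNetwork`: a directed graph (arc
relation) on a vertex type `V` together with an embedding of the label set `X`
onto the leaves.  `IsNetwork` collects the m-network axioms.  Since the
underlying graph `U(N)` of an m-network is connected and the degree-1 vertices
of `U(N)` are exactly the leaves, the suppressed graph `U(N)⁻` is an unrooted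
phylogenetic tree on `X` if and only if `U(N)` is acyclic; we use this as the
definition of `IsArboreal`.
-/

namespace ArbNet

variable {X V W : Type}

/-- In-degree of a vertex of a digraph given by its arc relation. -/
noncomputable def inDeg (A : V → V → Prop) (v : V) : ℕ := {u | A u v}.ncard

/-- Out-degree of a vertex of a digraph given by its arc relation. -/
noncomputable def outDeg (A : V → V → Prop) (v : V) : ℕ := {u | A v u}.ncard

/-- A root: in-degree 0 and out-degree at least 2. -/
def IsRoot (A : V → V → Prop) (v : V) : Prop := inDeg A v = 0 ∧ 2 ≤ outDeg A v

/-- A leaf vertex: in-degree 1 and out-degree 0. -/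
def IsLeafVtx (A : V → V → Prop) (v : V) : Prop := inDeg A v = 1 ∧ outDeg A v = 0

/-- A hybrid vertex: out-degree 1 and in-degree at least 2. -/
def IsHybrid (A : V → V → Prop) (v : V) : Prop := outDeg A v = 1 ∧ 2 ≤ inDeg A v

/-- A tree vertex: in-degree 1 and out-degree at least 2. -/
def IsTreeVtx (A : V → V → Prop) (v : V) : Prop := inDeg A v = 1 ∧ 2 ≤ outDeg A v

/-- `Above A v u`: there is a directed path from `v` down to `u`
(`v` is above `u`, `u` is below `v`). -/
def Above (A : V → V → Prop) : V → V → Prop := Relation.ReflTransGen A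

/-- The underlying undirected (simple) graph `U(N)` of a digraph. -/
def underlying (A : V → V → Prop) : SimpleGraph V where
  Adj u v := u ≠ v ∧ (A u v ∨ A v u)
  symm := by
    constructor
    intro u v h
    exact ⟨h.1.symm, h.2.symm⟩
  loopless := by
    constructor
    intro v h
    exact h.1 rfl

/-- The data of a multi-rooted network on label set `X` with vertex type `V`:
an arc relation together with the labelling of the leaves by `X`. -/
structure PreNetwork (X : Type) (V : Type) where
  Arc : V → V → Prop
  leaf : X → V

/-- The m-network axioms: a finite DAG whose underlying graph is connected,
whose leaves are (labelled by) exactly `X`, every in-degree-0 vertex is a root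
of out-degree exactly 2, there is no vertex of in-degree 1 and out-degree 1,
and every interior vertex is a hybrid or a tree vertex. -/
def IsNetwork (N : PreNetwork X V) : Prop :=
  Finite V ∧
  (∀ v, ¬ Relation.TransGen N.Arc v v) ∧
  (underlying N.Arc).Connected ∧
  Function.Injective N.leaf ∧
  (∀ v, IsLeafVtx N.Arc v ↔ v ∈ Set.range N.leaf) ∧
  (∀ v, (inDeg N.Arc v = 0 ∧ outDeg N.Arc v = 2) ∨ IsLeafVtx N.Arc v ∨
      IsHybrid N.Arc v ∨ IsTreeVtx N.Arc v)

/-- `N` is arboreal iff the suppressed underlying graph `U(N)⁻` is an unrooted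
phylogenetic tree on `X`; for a connected `U(N)` whose degree-1 vertices are
exactly the leaves this holds iff `U(N)` is acyclic. -/
def IsArboreal (N : PreNetwork X V) : Prop := (underlying N.Arc).IsAcyclic

/-- Stack-free: no arc whose tail and head are both hybrids. -/
def StackFree (N : PreNetwork X V) : Prop :=
  ∀ u v, N.Arc u v → ¬(IsHybrid N.Arc u ∧ IsHybrid N.Arc v)

/-- Membership in the class `𝒜(X)` of stack-free arboreal networks on `X`. -/
def InA (N : PreNetwork X V) : Prop := IsNetwork N ∧ IsArboreal N ∧ StackFree N

/-- Banyan: the parents of every hybrid are roots, and every leaf is the child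
of a root or of a hybrid. -/
def Banyan (N : PreNetwork X V) : Prop :=
  (∀ h p, IsHybrid N.Arc h → N.Arc p h → IsRoot N.Arc p) ∧
  (∀ x : X, ∃ p, N.Arc p (N.leaf x) ∧ (IsRoot N.Arc p ∨ IsHybrid N.Arc p))

/-- The set `L(v)` of labels of leaves below a vertex `v`. -/
def leavesBelow (N : PreNetwork X V) (v : V) : Set X :=
  {x | Above N.Arc v (N.leaf x)}

/-- The triplet `xy|z` is induced by `N`: `x, y, z` are pairwise distinct and
there are a root `r` and a common ancestor `v ≤ r` of `x` and `y` with
`z ∈ L(r)` and `z ∉ L(v)` (equivalently, `z` is not below the least common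
ancestor of `x` and `y` in the tree below `r`). -/
def TripletRel (N : PreNetwork X V) (x y z : X) : Prop :=
  x ≠ y ∧ x ≠ z ∧ y ≠ z ∧
  ∃ r v, IsRoot N.Arc r ∧ Above N.Arc r v ∧
    Above N.Arc v (N.leaf x) ∧ Above N.Arc v (N.leaf y) ∧
    Above N.Arc r (N.leaf z) ∧ ¬ Above N.Arc v (N.leaf z)

/-- Degree of a vertex in the underlying undirected graph `U(N)`. -/
noncomputable def udeg (N : PreNetwork X V) (v : V) : ℕ :=
  ((underlying N.Arc).neighborSet v).ncard

/-- The duet `x ∥ y` is induced by `N`: `x ≠ y`, no triplet induced by `N`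
contains both `x` and `y` among its leaves, and the path in `U(N)` joining
`x` and `y` crosses precisely one degree-2 vertex of `U(N)`. -/
def DuetRel (N : PreNetwork X V) (x y : X) : Prop :=
  x ≠ y ∧
  (∀ z, ¬ TripletRel N x y z ∧ ¬ TripletRel N x z y ∧ ¬ TripletRel N y z x) ∧
  ∃ w : (underlying N.Arc).Walk (N.leaf x) (N.leaf y),
    w.IsPath ∧ (w.support.countP fun v => decide (udeg N v = 2)) = 1

/-- The triplet system `ℛ(N)`, a triplet `xy|z` being recorded as the pair
`({x,y}, z)` with `{x,y}` an unordered pair. -/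
def tripletSys (N : PreNetwork X V) : Set (Sym2 X × X) :=
  {t | ∃ x y z, TripletRel N x y z ∧ t = (s(x, y), z)}

/-- The duet system `𝒟(N)`. -/
def duetSys (N : PreNetwork X V) : Set (Sym2 X) :=
  {d | ∃ x y, DuetRel N x y ∧ d = s(x, y)}

/-- The union `𝒟(N) ∪ ℛ(N)`, with duets and triplets kept as different kinds
of objects (left resp. right summand). -/
def dtSys (N : PreNetwork X V) : Set (Sym2 X ⊕ (Sym2 X × X)) :=
  (Sum.inl '' duetSys N) ∪ (Sum.inr '' tripletSys N)

/-- Isomorphism of networks on `X`: a bijection of the vertex sets preserving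
arcs that is the identity on `X`. -/
def Isomorphic (N : PreNetwork X V) (N' : PreNetwork X W) : Prop :=
  ∃ e : V ≃ W, (∀ u v, N.Arc u v ↔ N'.Arc (e u) (e v)) ∧
    ∀ x, e (N.leaf x) = N'.leaf x


private lemma wf_child {X V : Type} (N : PreNetwork X V) (hfin : Finite V)
    (hacyc : ∀ v, ¬ Relation.TransGen N.Arc v v) :
    WellFounded (fun a b : V => N.Arc b a) := by
  haveI : IsTrans V (Relation.TransGen (fun a b : V => N.Arc b a)) :=
    ⟨fun _ _ _ h h' => h.trans h'⟩
  haveI : IsIrrefl V (Relation.TransGen (fun a b : V => N.Arc b a)) := by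
    constructor
    intro v hv
    exact hacyc v (Relation.transGen_swap.mp hv)
  have hwf : WellFounded (Relation.TransGen (fun a b : V => N.Arc b a)) :=
    Finite.wellFounded_of_trans_of_irrefl _
  exact @Subrelation.wf V
    (Relation.TransGen (fun a b : V => N.Arc b a)) (fun a b : V => N.Arc b a)
    (fun h => Relation.TransGen.single h) hwf

private lemma no_tree {X V : Type} (N : PreNetwork X V) (hfin : Finite V)
    (hacyc : ∀ v, ¬ Relation.TransGen N.Arc v v)
    (hleaf : ∀ v, IsLeafVtx N.Arc v ↔ v ∈ Set.range N.leaf)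
    (hcases : ∀ v, (inDeg N.Arc v = 0 ∧ outDeg N.Arc v = 2) ∨ IsLeafVtx N.Arc v ∨
      IsHybrid N.Arc v ∨ IsTreeVtx N.Arc v)
    (hB : Banyan N) :
    ∀ v, ¬ IsTreeVtx N.Arc v := by
  intro v
  induction v using (wf_child N hfin hacyc).induction with
  | _ v IH =>
  intro hv
  have hne : {u | N.Arc v u}.Nonempty := by
    have h2 : 0 < outDeg N.Arc v := lt_of_lt_of_le two_pos hv.2
    exact (Set.ncard_pos (Set.toFinite _)).mp h2
  obtain ⟨u, hu⟩ := hne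
  have hin : 0 < inDeg N.Arc u := (Set.ncard_pos (Set.toFinite _)).mpr ⟨v, hu⟩
  rcases hcases u with h0 | hl | hh | ht
  · omega
  · obtain ⟨x, hx⟩ := (hleaf u).mp hl
    obtain ⟨p, hp, hpr⟩ := hB.2 x
    rw [hx] at hp
    have hone : inDeg N.Arc u = 1 := hl.1
    obtain ⟨a, ha⟩ := Set.ncard_eq_one.mp hone
    have hva : v = a := by
      have : v ∈ {w | N.Arc w u} := hu
      rw [ha] at this; exact this
    have hpa : p = a := by
      have : p ∈ {w | N.Arc w u} := hp
      rw [ha] at this; exact this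
    rcases hpr with hr | hhy
    · have : inDeg N.Arc v = 0 := by rw [hva, ← hpa]; exact hr.1
      rw [hv.1] at this; exact one_ne_zero this
    · have h1 : outDeg N.Arc v = 1 := by rw [hva, ← hpa]; exact hhy.1
      have h2 := hv.2
      omega
  · have hr := hB.1 u v hh hu
    have : inDeg N.Arc v = 0 := hr.1
    rw [hv.1] at this; exact one_ne_zero this
  · exact IH u hu ht

private lemma unique_leaf_below {X V : Type} (N : PreNetwork X V) (hfin : Finite V)
    (hacyc : ∀ v, ¬ Relation.TransGen N.Arc v v)
    (hleaf : ∀ v, IsLeafVtx N.Arc v ↔ v ∈ Set.range N.leaf)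
    (hcases : ∀ v, (inDeg N.Arc v = 0 ∧ outDeg N.Arc v = 2) ∨ IsLeafVtx N.Arc v ∨
      IsHybrid N.Arc v ∨ IsTreeVtx N.Arc v)
    (hinj : Function.Injective N.leaf)
    (hB : Banyan N) :
    ∀ v, (IsLeafVtx N.Arc v ∨ IsHybrid N.Arc v) →
      ∀ x y : X, Above N.Arc v (N.leaf x) → Above N.Arc v (N.leaf y) → x = y := by
  intro v
  induction v using (wf_child N hfin hacyc).induction with
  | _ v IH =>
  intro hv x y hx hy
  rcases hv with hl | hh
  · have hempty : {u | N.Arc v u} = ∅ := Set.ncard_eq_zero (Set.toFinite _)|>.mp hl.2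
    have hvx : v = N.leaf x := by
      rcases hx.cases_head with h | ⟨c, hc, _⟩
      · exact h
      · exact absurd (Set.eq_empty_iff_forall_notMem.mp hempty c) (by simp [hc])
    have hvy : v = N.leaf y := by
      rcases hy.cases_head with h | ⟨c, hc, _⟩
      · exact h
      · exact absurd (Set.eq_empty_iff_forall_notMem.mp hempty c) (by simp [hc])
    exact hinj (hvx ▸ hvy)
  · have hne : ∀ z : X, v ≠ N.leaf z := by
      intro z hz
      have : IsLeafVtx N.Arc v := by rw [hz]; exact (hleaf _).mpr ⟨z, rfl⟩
      have h0 : outDeg N.Arc v = 0 := this.2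
      rw [hh.1] at h0; exact one_ne_zero h0
    obtain ⟨c, hc, hcx⟩ : ∃ c, N.Arc v c ∧ Above N.Arc c (N.leaf x) := by
      rcases hx.cases_head with h | h
      · exact absurd h (hne x)
      · exact h
    obtain ⟨c', hc', hcy⟩ : ∃ c', N.Arc v c' ∧ Above N.Arc c' (N.leaf y) := by
      rcases hy.cases_head with h | h
      · exact absurd h (hne y)
      · exact h
    obtain ⟨a, ha⟩ := Set.ncard_eq_one.mp hh.1
    have hca : c = a := by have : c ∈ {u | N.Arc v u} := hc; rw [ha] at this; exact this
    have hca' : c' = a := by have : c' ∈ {u | N.Arc v u} := hc'; rw [ha] at this; exact this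
    have hcc : c' = c := by rw [hca, hca']
    have hinc : 0 < inDeg N.Arc c := (Set.ncard_pos (Set.toFinite _)).mpr ⟨v, hc⟩
    have hck : IsLeafVtx N.Arc c ∨ IsHybrid N.Arc c := by
      rcases hcases c with h0 | hl | hh' | ht
      · omega
      · exact Or.inl hl
      · exact Or.inr hh'
      · exact absurd ht (no_tree N hfin hacyc hleaf hcases hB c)
    exact IH c hc hck x y hcx (hcc ▸ hcy)

/-- If a stack-free arboreal network on `X` (with `|X| ≥ 3`)
is banyan, then its induced triplet system is empty. -/
theorem banyan_implies_no_triplets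
    {X V : Type} [Finite X] (hX : 3 ≤ Nat.card X)
    (N : PreNetwork X V) (hN : InA N) (hB : Banyan N) :
    tripletSys N = ∅ := by
  obtain ⟨⟨hfin, hacyc, hconn, hinj, hleaf, hcases⟩, harb, hsf⟩ := hN
  ext t
  simp only [tripletSys, Set.mem_setOf_eq, Set.mem_empty_iff_false, iff_false]
  rintro ⟨x, y, z, ⟨hxy, hxz, hyz, r, v, hr, hrv, hvx, hvy, hrz, hvz⟩, -⟩
  have hvr : v ≠ r := by rintro rfl; exact hvz hrz
  obtain ⟨p, -, hp⟩ : ∃ p, Above N.Arc r p ∧ N.Arc p v := by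
    rcases hrv.cases_tail with h | h
    · exact absurd h hvr
    · exact h
  have hinv : 0 < inDeg N.Arc v := (Set.ncard_pos (Set.toFinite _)).mpr ⟨p, hp⟩
  have hvk : IsLeafVtx N.Arc v ∨ IsHybrid N.Arc v := by
    rcases hcases v with h0 | hl | hh | ht
    · omega
    · exact Or.inl hl
    · exact Or.inr hh
    · exact absurd ht (no_tree N hfin hacyc hleaf hcases hB v)
  exact hxy (unique_leaf_below N hfin hacyc hleaf hcases hinj hB v hvk x y hvx hvy)


end ArbNet
end

section
/- Let X be a finite set with |X| ≥ 3 and let N be a stack-free arboreal network on X (N ∈ A(X)). If the set R(N) of triplets induced by N is empty, then N is banyan. -/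
/-!
Common definitions for formalizing arboreal networks.

A (multi-rooted) network is modelled as a `PreNetwork`: a directed graph (arc
relation) on a vertex type `V` together with an embedding of the label set `X`
onto the leaves.  `IsNetwork` collects the m-network axioms.  Since the
underlying graph `U(N)` of an m-network is connected and the degree-1 vertices
of `U(N)` are exactly the leaves, the suppressed graph `U(N)⁻` is an unrooted
phylogenetic tree on `X` if and only if `U(N)` is acyclic; we use this as the
definition of `IsArboreal`.
-/

namespace ArbNet

variable {X V W : Type}

section Aux

variable {A : V → V → Prop}

lemma arc_ne (hdag : ∀ v, ¬ Relation.TransGen A v v) {u v : V} (h : A u v) : u ≠ v := by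
  rintro rfl
  exact hdag u (Relation.TransGen.single h)

lemma adj_of_arc (hdag : ∀ v, ¬ Relation.TransGen A v v) {u v : V} (h : A u v) :
    (underlying A).Adj u v := ⟨arc_ne hdag h, Or.inl h⟩

/-- From a directed reachability we can build an undirected path all whose
vertices are reachable from the start. -/
lemma exists_path_of_above (hdag : ∀ v, ¬ Relation.TransGen A v v) {u v : V}
    (h : Relation.ReflTransGen A u v) :
    ∃ p : (underlying A).Walk u v, p.IsPath ∧
      ∀ x ∈ p.support, Relation.ReflTransGen A u x := by
  induction h using Relation.ReflTransGen.head_induction_on with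
  | refl =>
    refine ⟨SimpleGraph.Walk.nil, SimpleGraph.Walk.IsPath.nil, ?_⟩
    intro x hx
    simp only [SimpleGraph.Walk.support_nil, List.mem_singleton] at hx
    subst hx; exact Relation.ReflTransGen.refl
  | @head a c harc hrtg ih =>
    obtain ⟨p, hp, hsup⟩ := ih
    have hmem : a ∉ p.support := by
      intro hmem
      exact hdag a (Relation.TransGen.head' harc (hsup a hmem))
    refine ⟨SimpleGraph.Walk.cons (adj_of_arc hdag harc) p, hp.cons hmem, ?_⟩
    intro x hx
    rw [SimpleGraph.Walk.support_cons, List.mem_cons] at hx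
    rcases hx with rfl | hx
    · exact Relation.ReflTransGen.refl
    · exact Relation.ReflTransGen.head harc (hsup x hx)

/-- No diamonds: in an acyclic underlying graph, two distinct children of `w`
cannot both be above a common vertex `z`. -/
lemma no_diamond (hdag : ∀ v, ¬ Relation.TransGen A v v)
    (hac : (underlying A).IsAcyclic) {w a b z : V}
    (hwa : A w a) (hwb : A w b) (hab : a ≠ b)
    (haz : Relation.ReflTransGen A a z) (hbz : Relation.ReflTransGen A b z) : False := by
  obtain ⟨p, hp, hpsup⟩ := exists_path_of_above hdag haz
  obtain ⟨q, hq, hqsup⟩ := exists_path_of_above hdag hbz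
  have hwp : w ∉ p.support := fun hm => hdag w (Relation.TransGen.head' hwa (hpsup w hm))
  have hwq : w ∉ q.support := fun hm => hdag w (Relation.TransGen.head' hwb (hqsup w hm))
  set P := SimpleGraph.Walk.cons (adj_of_arc hdag hwa) p with hP
  set Q := SimpleGraph.Walk.cons (adj_of_arc hdag hwb) q with hQ
  have hPQ : (⟨P, hp.cons hwp⟩ : (underlying A).Path w z) = ⟨Q, hq.cons hwq⟩ :=
    SimpleGraph.isAcyclic_iff_path_unique.mp hac _ _
  have hval : P = Q := congrArg Subtype.val hPQ
  have hsupp : P.support = Q.support := congrArg SimpleGraph.Walk.support hval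
  rw [hP, hQ, SimpleGraph.Walk.support_cons, SimpleGraph.Walk.support_cons,
    p.support_eq_cons, q.support_eq_cons] at hsupp
  simp only [List.cons.injEq] at hsupp
  exact hab hsupp.2.1

end Aux

section Network

variable {N : PreNetwork X V}

lemma inDeg_eq_zero_iff (hN : IsNetwork N) {v : V} :
    inDeg N.Arc v = 0 ↔ ∀ u, ¬ N.Arc u v := by
  haveI : Finite V := hN.1
  rw [inDeg, Set.ncard_eq_zero (Set.toFinite _), Set.eq_empty_iff_forall_notMem]
  rfl

/-- Every vertex has a leaf below it. -/
lemma exists_leaf_below (hN : IsNetwork N) (v : V) :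
    ∃ x : X, Above N.Arc v (N.leaf x) := by
  haveI : Finite V := hN.1
  have hdag := hN.2.1
  haveI : IsTrans V (Relation.TransGen (fun u w => N.Arc w u)) := ⟨fun _ _ _ => .trans⟩
  haveI : IsIrrefl V (Relation.TransGen (fun u w => N.Arc w u)) := by
    constructor
    intro a ha
    exact hdag a ((Relation.transGen_swap).mp ha)
  have wf0 : WellFounded (Relation.TransGen (fun u w : V => N.Arc w u)) :=
    Finite.wellFounded_of_trans_of_irrefl _
  have wf : WellFounded (fun u w : V => N.Arc w u) :=
    ⟨fun a => acc_transGen_iff.mp (wf0.apply a)⟩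
  induction v using WellFounded.induction wf with
  | _ v ih =>
    by_cases hout : outDeg N.Arc v = 0
    · have hleaf : IsLeafVtx N.Arc v := by
        rcases hN.2.2.2.2.2 v with h | h | h | h
        · omega
        · exact h
        · exact absurd h.1 (by omega)
        · exact absurd h.2 (by omega)
      obtain ⟨x, hx⟩ := (hN.2.2.2.2.1 v).mp hleaf
      exact ⟨x, hx ▸ Relation.ReflTransGen.refl⟩
    · obtain ⟨u, hu⟩ := Set.nonempty_of_ncard_ne_zero hout
      obtain ⟨x, hx⟩ := ih u hu
      exact ⟨x, Relation.ReflTransGen.head hu hx⟩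

/-- Every vertex has a root above it. -/
lemma exists_root_above (hN : IsNetwork N) (v : V) :
    ∃ r : V, IsRoot N.Arc r ∧ Above N.Arc r v := by
  haveI : Finite V := hN.1
  have hdag := hN.2.1
  haveI : IsTrans V (Relation.TransGen N.Arc) := ⟨fun _ _ _ => .trans⟩
  haveI : IsIrrefl V (Relation.TransGen N.Arc) := ⟨hdag⟩
  have wf0 : WellFounded (Relation.TransGen N.Arc) :=
    Finite.wellFounded_of_trans_of_irrefl _
  have wf : WellFounded N.Arc :=
    ⟨fun a => acc_transGen_iff.mp (wf0.apply a)⟩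
  induction v using WellFounded.induction wf with
  | _ v ih =>
    by_cases hin : inDeg N.Arc v = 0
    · have hroot : IsRoot N.Arc v := by
        rcases hN.2.2.2.2.2 v with h | h | h | h
        · exact ⟨h.1, by omega⟩
        · exact absurd h.1 (by omega)
        · exact absurd h.2 (by omega)
        · exact absurd h.1 (by omega)
      exact ⟨v, hroot, Relation.ReflTransGen.refl⟩
    · obtain ⟨u, hu⟩ := Set.nonempty_of_ncard_ne_zero hin
      obtain ⟨r, hr, hru⟩ := ih u hu
      exact ⟨r, hr, hru.tail hu⟩

/-- If the network has a tree vertex, it induces a triplet. -/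
lemma treeVtx_gives_triplet (hN : IsNetwork N) (harb : IsArboreal N)
    {t : V} (ht : IsTreeVtx N.Arc t) : ∃ x y z, TripletRel N x y z := by
  haveI : Finite V := hN.1
  have hdag := hN.2.1
  obtain ⟨a, b, ha, hb, hab⟩ :=
    (Set.one_lt_ncard_iff (Set.toFinite _)).mp (by have := ht.2; omega : 1 < outDeg N.Arc t)
  obtain ⟨x, hx⟩ := exists_leaf_below hN a
  obtain ⟨y, hy⟩ := exists_leaf_below hN b
  have hxy : x ≠ y := by
    rintro rfl
    exact no_diamond hdag harb ha hb hab hx hy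
  obtain ⟨r, hr, hrt⟩ := exists_root_above hN t
  have hrtne : r ≠ t := by
    rintro rfl
    have h1 := ht.1
    have h2 := hr.1
    omega
  rcases Relation.ReflTransGen.cases_head hrt with rfl | ⟨c, hrc, hct⟩
  · exact absurd rfl hrtne
  obtain ⟨d, hd, hdc⟩ := Set.exists_ne_of_one_lt_ncard
    (by have := hr.2; omega : 1 < outDeg N.Arc r) c
  obtain ⟨z, hz⟩ := exists_leaf_below hN d
  have hnz : ¬ Above N.Arc t (N.leaf z) := by
    intro hAbove
    exact no_diamond hdag harb hrc hd hdc.symm (hct.trans hAbove) hz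
  have hzx : x ≠ z := by
    rintro rfl
    exact hnz (Relation.ReflTransGen.head ha hx)
  have hzy : y ≠ z := by
    rintro rfl
    exact hnz (Relation.ReflTransGen.head hb hy)
  exact ⟨x, y, z, hxy, hzx, hzy, r, t, hr, hrt,
    Relation.ReflTransGen.head ha hx, Relation.ReflTransGen.head hb hy,
    Relation.ReflTransGen.head hd hz, hnz⟩

lemma outDeg_ne_zero (hN : IsNetwork N) {p u : V} (h : N.Arc p u) :
    outDeg N.Arc p ≠ 0 := by
  haveI : Finite V := hN.1
  intro h0
  rw [outDeg, Set.ncard_eq_zero (Set.toFinite _),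
    Set.eq_empty_iff_forall_notMem] at h0
  exact h0 u h

end Network

/-- If a stack-free arboreal network on `X` (with `|X| ≥ 3`)
induces no triplets, then it is banyan. -/
theorem no_triplets_implies_banyan
    {X V : Type} [Finite X] (hX : 3 ≤ Nat.card X)
    (N : PreNetwork X V) (hN : InA N) (hR : tripletSys N = ∅) :
    Banyan N := by
  obtain ⟨hNet, harb, hsf⟩ := hN
  haveI : Finite V := hNet.1
  have hNoTree : ∀ v, ¬ IsTreeVtx N.Arc v := by
    intro v hv
    obtain ⟨x, y, z, hT⟩ := treeVtx_gives_triplet hNet harb hv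
    have hmem : (s(x, y), z) ∈ tripletSys N := ⟨x, y, z, hT, rfl⟩
    rw [hR] at hmem
    exact hmem
  constructor
  · intro h p hh hp
    rcases hNet.2.2.2.2.2 p with hc | hc | hc | hc
    · exact ⟨hc.1, by omega⟩
    · exact absurd hc.2 (outDeg_ne_zero hNet hp)
    · exact absurd ⟨hc, hh⟩ (hsf p h hp)
    · exact absurd hc (hNoTree p)
  · intro x
    have hlf : IsLeafVtx N.Arc (N.leaf x) := (hNet.2.2.2.2.1 _).mpr ⟨x, rfl⟩
    obtain ⟨p, hp⟩ := Set.nonempty_of_ncard_ne_zero (s := {u | N.Arc u (N.leaf x)})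
      (by have := hlf.1; rw [inDeg] at this; omega)
    refine ⟨p, hp, ?_⟩
    rcases hNet.2.2.2.2.2 p with hc | hc | hc | hc
    · exact Or.inl ⟨hc.1, by omega⟩
    · exact absurd hc.2 (outDeg_ne_zero hNet hp)
    · exact Or.inr hc
    · exact absurd hc (hNoTree p)

end ArbNet
end

section
/- Let N be an arboreal network on a finite set X with |X| ≥ 3, and let x∥y ∈ D(N) be a duet induced by N. Then the unique degree-2 vertex of U(N) crossed by the path in U(N) joining x and y is a root of N. (Each duet of N gives rise to a root of N.) -/
/-!
Common definitions for formalizing arboreal networks.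

A (multi-rooted) network is modelled as a `PreNetwork`: a directed graph (arc
relation) on a vertex type `V` together with an embedding of the label set `X`
onto the leaves.  `IsNetwork` collects the m-network axioms.  Since the
underlying graph `U(N)` of an m-network is connected and the degree-1 vertices
of `U(N)` are exactly the leaves, the suppressed graph `U(N)⁻` is an unrooted
phylogenetic tree on `X` if and only if `U(N)` is acyclic; we use this as the
definition of `IsArboreal`.
-/

namespace ArbNet

variable {X V W : Type}

/-- Every duet of an arboreal network gives rise to a root:
the unique degree-2 vertex of `U(N)` crossed by the path in `U(N)` joining the
two leaves of the duet is a root of `N`.  (Since `U(N)` is a tree, we state it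
for every path joining the two leaves.) -/
theorem duet_gives_root
    {X V : Type} [Finite X] (hX : 3 ≤ Nat.card X)
    (N : PreNetwork X V) (hN : IsNetwork N) (hArb : IsArboreal N)
    {x y : X} (hd : DuetRel N x y) :
    ∀ w : (underlying N.Arc).Walk (N.leaf x) (N.leaf y), w.IsPath →
      ∀ v ∈ w.support, udeg N v = 2 → IsRoot N.Arc v := by
  intro w _ v _ hv2
  obtain ⟨hfin, hacyc, _, _, _, hclass⟩ := hN
  -- udeg v = inDeg v + outDeg v
  have hset : (underlying N.Arc).neighborSet v = {u | N.Arc u v} ∪ {u | N.Arc v u} := by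
    ext u
    simp only [SimpleGraph.mem_neighborSet, underlying, Set.mem_union, Set.mem_setOf_eq]
    constructor
    · rintro ⟨_, h | h⟩
      · exact Or.inr h
      · exact Or.inl h
    · intro h
      refine ⟨?_, h.symm⟩
      rintro rfl
      rcases h with h | h <;> exact hacyc v (Relation.TransGen.single h)
  have hdisj : Disjoint {u | N.Arc u v} {u | N.Arc v u} := by
    rw [Set.disjoint_left]
    intro u h1 h2
    exact hacyc v (Relation.TransGen.head h2 (Relation.TransGen.single h1))
  have hsum : udeg N v = inDeg N.Arc v + outDeg N.Arc v := by
    rw [udeg, hset, Set.ncard_union_eq hdisj (Set.toFinite _) (Set.toFinite _)]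
    rfl
  rcases hclass v with ⟨h0, h2⟩ | ⟨h1, h0⟩ | ⟨h1, h2⟩ | ⟨h1, h2⟩
  · exact ⟨h0, h2.ge⟩
  · omega
  · omega
  · omega

end ArbNet
end

section
/- Let N be an arboreal network on a finite set X with |X| ≥ 3, and let r and r' be distinct roots of N such that L(r) ∩ L(r') ≠ ∅. Then there exists a vertex v on the undirected path from r to r' in U(N) that is a hybrid of N and is below both r and r'. Furthermore, letting c be the unique child of v and letting K (respectively K') be the subtree of N_r (respectively N_{r'}) rooted at c with all degree-2 vertices suppressed, K and K' are rooted phylogenetic trees on the same leaf set and are isomorphic via an isomorphism that is the identity on their leaves. -/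
/-!
Common definitions for formalizing arboreal networks.

A (multi-rooted) network is modelled as a `PreNetwork`: a directed graph (arc
relation) on a vertex type `V` together with an embedding of the label set `X`
onto the leaves.  `IsNetwork` collects the m-network axioms.  Since the
underlying graph `U(N)` of an m-network is connected and the degree-1 vertices
of `U(N)` are exactly the leaves, the suppressed graph `U(N)⁻` is an unrooted
phylogenetic tree on `X` if and only if `U(N)` is acyclic; we use this as the
definition of `IsArboreal`.
-/

namespace ArbNet

variable {X V W : Type}

/-- The vertex set of the subtree of the spanning tree `N_r` rooted at `c`:
vertices reachable from `c` by arcs whose tails lie below the root `r`. -/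
def belowIn (N : PreNetwork X V) (r c u : V) : Prop :=
  Relation.ReflTransGen (fun a b => N.Arc a b ∧ Above N.Arc r a) c u


lemma walk_of_reflTransGen {A : V → V → Prop}
    (hacyc : ∀ v, ¬ Relation.TransGen A v v) {a b : V}
    (h : Relation.ReflTransGen A a b) :
    ∃ w : (underlying A).Walk a b, ∀ u ∈ w.support,
      Relation.ReflTransGen A a u ∧ Relation.ReflTransGen A u b := by
  induction h using Relation.ReflTransGen.head_induction_on with
  | refl =>
    refine ⟨SimpleGraph.Walk.nil, ?_⟩
    intro u hu
    simp only [SimpleGraph.Walk.support_nil, List.mem_singleton] at hu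
    subst hu
    exact ⟨Relation.ReflTransGen.refl, Relation.ReflTransGen.refl⟩
  | head hac hcb ih =>
    obtain ⟨w, hw⟩ := ih
    refine ⟨SimpleGraph.Walk.cons ⟨?_, Or.inl hac⟩ w, ?_⟩
    · rintro rfl; exact hacyc _ (Relation.TransGen.single hac)
    · intro u hu
      change u ∈ _ :: w.support at hu
      rcases List.mem_cons.mp hu with rfl | hu
      · exact ⟨Relation.ReflTransGen.refl, Relation.ReflTransGen.head hac hcb⟩
      · exact ⟨Relation.ReflTransGen.head hac (hw u hu).1, (hw u hu).2⟩

lemma append_reverse_isPath {G : SimpleGraph V} {r r' v : V}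
    {p : G.Walk r v} {q : G.Walk r' v} (hp : p.IsPath) (hq : q.IsPath)
    (hd : ∀ u, u ∈ p.support → u ∈ q.support → u = v) :
    (p.append q.reverse).IsPath := by
  rw [SimpleGraph.Walk.isPath_def, SimpleGraph.Walk.support_append, List.nodup_append]
  refine ⟨hp.support_nodup, (hq.reverse.support_nodup).tail, ?_⟩
  intro u hup u' huq heq
  rw [← heq] at huq
  have hnd := hq.reverse.support_nodup
  rw [q.reverse.support_eq_cons] at hnd
  have huq' : u ∈ q.support := by
    have := List.mem_of_mem_tail huq
    rwa [SimpleGraph.Walk.support_reverse, List.mem_reverse] at this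
  have huv : u = v := hd u hup huq'
  subst huv
  exact (List.nodup_cons.mp hnd).1 huq

lemma belowIn_iff (N : PreNetwork X V) {r c : V}
    (hrc : Above N.Arc r c) (u : V) :
    belowIn N r c u ↔ Relation.ReflTransGen N.Arc c u := by
  constructor
  · exact fun h => Relation.ReflTransGen.mono (fun a b (h : N.Arc a b ∧ Above N.Arc r a) => h.1) _ _ h
  · intro h
    induction h with
    | refl => exact Relation.ReflTransGen.refl
    | tail hca hab ih =>
      exact ih.tail ⟨hab,
        Relation.ReflTransGen.trans hrc
          (Relation.ReflTransGen.mono (fun a b (h : N.Arc a b ∧ Above N.Arc r a) => h.1) _ _ ih)⟩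

/-- If `r ≠ r'` are roots of an arboreal network with
`L(r) ∩ L(r') ≠ ∅`, then some vertex `v` on the undirected path from `r` to
`r'` is a hybrid below both `r` and `r'`; moreover, for the child `c` of `v`,
the subtree of `N_r` rooted at `c` and the subtree of `N_{r'}` rooted at `c`
have the same leaf set, the same vertices and the same arcs — hence (also
after suppressing degree-2 vertices) they are rooted phylogenetic trees that
are isomorphic via the identity on their common leaf set. -/
theorem hybrid_between_roots
    {X V : Type} [Finite X] (hX : 3 ≤ Nat.card X)
    (N : PreNetwork X V) (hN : IsNetwork N) (hArb : IsArboreal N)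
    {r r' : V} (hr : IsRoot N.Arc r) (hr' : IsRoot N.Arc r') (hrr : r ≠ r')
    (hmeet : (leavesBelow N r ∩ leavesBelow N r').Nonempty) :
    ∃ v, IsHybrid N.Arc v ∧ Above N.Arc r v ∧ Above N.Arc r' v ∧
      (∀ w : (underlying N.Arc).Walk r r', w.IsPath → v ∈ w.support) ∧
      ∀ c, N.Arc v c →
        ({z : X | belowIn N r c (N.leaf z)} = {z : X | belowIn N r' c (N.leaf z)}) ∧
        (∀ u, belowIn N r c u ↔ belowIn N r' c u) ∧
        (∀ a b, (N.Arc a b ∧ belowIn N r c a) ↔ (N.Arc a b ∧ belowIn N r' c a)) := by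
  obtain ⟨hFin, hacyc, hconn, hinj, hleafspec, hvert⟩ := hN
  obtain ⟨x, hxr, hxr'⟩ := hmeet
  haveI : Finite V := hFin
  haveI : DecidableEq V := Classical.decEq V
  haveI : IsIrrefl V (Relation.TransGen N.Arc) := ⟨hacyc⟩
  have hwf : WellFounded (Relation.TransGen N.Arc) :=
    Finite.wellFounded_of_trans_of_irrefl _
  have hSne : ({u | Above N.Arc r u ∧ Above N.Arc r' u} : Set V).Nonempty :=
    ⟨N.leaf x, hxr, hxr'⟩
  obtain ⟨v, hvS, hmin⟩ : ∃ v ∈ ({u | Above N.Arc r u ∧ Above N.Arc r' u} : Set V),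
      ∀ u ∈ ({u | Above N.Arc r u ∧ Above N.Arc r' u} : Set V),
        ¬ Relation.TransGen N.Arc u v :=
    ⟨hwf.min _ hSne, hwf.min_mem _ hSne, fun u hu => hwf.not_lt_min _ hu⟩
  have noArcIntoRoot : ∀ {p q : V}, IsRoot N.Arc q → ¬ N.Arc p q := by
    intro p q hq hpq
    have h0 : ({u | N.Arc u q} : Set V) = ∅ := by
      have := hq.1
      rwa [inDeg, Set.ncard_eq_zero (Set.toFinite _)] at this
    exact absurd hpq (by simpa using Set.eq_empty_iff_forall_notMem.mp h0 p)
  have hrv : Above N.Arc r v := hvS.1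
  have hr'v : Above N.Arc r' v := hvS.2
  -- v is not a root
  have hvner : v ≠ r := by
    rintro rfl
    rcases Relation.ReflTransGen.cases_tail hr'v with h1 | ⟨p, _, hp2⟩
    · exact hrr h1
    · exact noArcIntoRoot hr hp2
  have hvner' : v ≠ r' := by
    rintro rfl
    rcases Relation.ReflTransGen.cases_tail hrv with h1 | ⟨p, _, hp2⟩
    · exact hrr h1.symm
    · exact noArcIntoRoot hr' hp2
  -- parents of v from each root
  obtain ⟨p, hp1, hp2⟩ : ∃ p, Above N.Arc r p ∧ N.Arc p v := by
    rcases Relation.ReflTransGen.cases_tail hrv with h1 | h2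
    · exact absurd h1 hvner
    · exact h2
  obtain ⟨p', hp'1, hp'2⟩ : ∃ p', Above N.Arc r' p' ∧ N.Arc p' v := by
    rcases Relation.ReflTransGen.cases_tail hr'v with h1 | h2
    · exact absurd h1 hvner'
    · exact h2
  have hpne : p ≠ p' := by
    rintro rfl
    exact hmin p ⟨hp1, hp'1⟩ (Relation.TransGen.single hp2)
  have hin2 : 2 ≤ inDeg N.Arc v := by
    rw [inDeg]
    have : 1 < ({u | N.Arc u v} : Set V).ncard :=
      (Set.one_lt_ncard_iff (Set.toFinite _)).mpr ⟨p, p', hp2, hp'2, hpne⟩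
    omega
  have hvhyb : IsHybrid N.Arc v := by
    rcases hvert v with h | h | h | h
    · omega
    · have := h.1; omega
    · exact h
    · have := h.1; omega
  -- characterization of the minimal common descendant
  have hkey : ∀ u, Relation.ReflTransGen N.Arc u v → Above N.Arc r u →
      Above N.Arc r' u → u = v := by
    intro u huv h1 h2
    by_contra hne
    rcases Relation.reflTransGen_iff_eq_or_transGen.mp huv with h | h
    · exact hne h.symm
    · exact hmin u ⟨h1, h2⟩ h
  obtain ⟨w1, hw1⟩ := walk_of_reflTransGen hacyc hrv
  obtain ⟨w2, hw2⟩ := walk_of_reflTransGen hacyc hr'v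
  have hP : (((w1.toPath : (underlying N.Arc).Walk r v)).append
      ((w2.toPath : (underlying N.Arc).Walk r' v)).reverse).IsPath := by
    refine append_reverse_isPath w1.toPath.2 w2.toPath.2 ?_
    intro u hu1 hu2
    have h1 := hw1 u (SimpleGraph.Walk.support_toPath_subset w1 hu1)
    have h2 := hw2 u (SimpleGraph.Walk.support_toPath_subset w2 hu2)
    exact hkey u h1.2 h1.1 h2.1
  refine ⟨v, hvhyb, hrv, hr'v, ?_, ?_⟩
  · intro w hwp
    have heq := SimpleGraph.isAcyclic_iff_path_unique.mp hArb ⟨w, hwp⟩ ⟨_, hP⟩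
    have hw : w = ((w1.toPath : (underlying N.Arc).Walk r v)).append
        ((w2.toPath : (underlying N.Arc).Walk r' v)).reverse :=
      congrArg Subtype.val heq
    rw [hw, SimpleGraph.Walk.mem_support_append_iff]
    exact Or.inl ((w1.toPath : (underlying N.Arc).Walk r v)).end_mem_support
  · intro c hvc
    have hrc : Above N.Arc r c := Relation.ReflTransGen.tail hrv hvc
    have hr'c : Above N.Arc r' c := Relation.ReflTransGen.tail hr'v hvc
    have hiff : ∀ u, belowIn N r c u ↔ belowIn N r' c u := by
      intro u
      rw [belowIn_iff N hrc, belowIn_iff N hr'c]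
    exact ⟨Set.ext fun z => hiff (N.leaf z), hiff,
      fun a b => and_congr_right fun _ => hiff a⟩

end ArbNet
end

section
/- Let X be a finite set with |X| = 3 and let N be a stack-free arboreal network on X (N ∈ A(X)). Then N has either one root or two roots; if N has exactly one root, then N is a rooted triplet on X (a rooted binary phylogenetic tree on the three elements of X with a cherry), and if N has two roots, then N is banyan. -/
/-!
Common definitions for formalizing arboreal networks.

A (multi-rooted) network is modelled as a `PreNetwork`: a directed graph (arc
relation) on a vertex type `V` together with an embedding of the label set `X`
onto the leaves.  `IsNetwork` collects the m-network axioms.  Since the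
underlying graph `U(N)` of an m-network is connected and the degree-1 vertices
of `U(N)` are exactly the leaves, the suppressed graph `U(N)⁻` is an unrooted
phylogenetic tree on `X` if and only if `U(N)` is acyclic; we use this as the
definition of `IsArboreal`.
-/

namespace ArbNet

variable {X V W : Type}

/-- `N` is the rooted triplet `xy|z`: its vertices are a root `ρ`, an interior
vertex `u` and the three leaves, and its arcs are exactly
`ρ→u`, `ρ→z`, `u→x`, `u→y`. -/
def IsRootedTriplet (N : PreNetwork X V) (x y z : X) : Prop :=
  ∃ ρ u : V,
    (∀ a b, N.Arc a b ↔ ((a = ρ ∧ b = u) ∨ (a = ρ ∧ b = N.leaf z) ∨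
      (a = u ∧ b = N.leaf x) ∨ (a = u ∧ b = N.leaf y))) ∧
    (∀ v : V, v = ρ ∨ v = u ∨ v ∈ Set.range N.leaf)

lemma ncard_setOf_eq [Fintype V] (p : V → Prop) [DecidablePred p] :
    {v | p v}.ncard = (Finset.univ.filter p).card := by
  rw [Set.ncard_eq_toFinset_card', Set.toFinset_setOf]

lemma outDeg_eq_card [Fintype V] (A : V → V → Prop) [DecidableRel A] (v : V) :
    outDeg A v = (Finset.univ.filter fun u => A v u).card :=
  ncard_setOf_eq _

lemma inDeg_eq_card [Fintype V] (A : V → V → Prop) [DecidableRel A] (v : V) :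
    inDeg A v = (Finset.univ.filter fun u => A u v).card :=
  ncard_setOf_eq _

lemma sum_outDeg [Fintype V] (A : V → V → Prop) [DecidableRel A] :
    ∑ v, outDeg A v = (Finset.univ.filter fun p : V × V => A p.1 p.2).card := by
  classical
  rw [Finset.card_eq_sum_card_fiberwise
    (f := fun p : V × V => p.1) (t := Finset.univ) (fun x _ => Finset.mem_univ _)]
  refine Finset.sum_congr rfl fun v _ => ?_
  rw [outDeg_eq_card]
  have h : ((Finset.univ.filter fun p : V × V => A p.1 p.2).filter fun p => p.1 = v)
      = (Finset.univ.filter fun u => A v u).image (fun u => (v, u)) := by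
    ext ⟨a, b⟩
    simp only [Finset.mem_filter, Finset.mem_image, Finset.mem_univ, true_and,
      Prod.mk.injEq]
    constructor
    · rintro ⟨h1, rfl⟩; exact ⟨b, h1, rfl, rfl⟩
    · rintro ⟨u, hu, rfl, rfl⟩; exact ⟨hu, rfl⟩
  rw [h, Finset.card_image_of_injective]
  intro a b hab
  exact (Prod.mk.injEq _ _ _ _ ▸ hab).2

lemma sum_inDeg [Fintype V] (A : V → V → Prop) [DecidableRel A] :
    ∑ v, inDeg A v = (Finset.univ.filter fun p : V × V => A p.1 p.2).card := by
  classical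
  rw [Finset.card_eq_sum_card_fiberwise
    (f := fun p : V × V => p.2) (t := Finset.univ) (fun x _ => Finset.mem_univ _)]
  refine Finset.sum_congr rfl fun v _ => ?_
  rw [inDeg_eq_card]
  have h : ((Finset.univ.filter fun p : V × V => A p.1 p.2).filter fun p => p.2 = v)
      = (Finset.univ.filter fun u => A u v).image (fun u => (u, v)) := by
    ext ⟨a, b⟩
    simp only [Finset.mem_filter, Finset.mem_image, Finset.mem_univ, true_and,
      Prod.mk.injEq]
    constructor
    · rintro ⟨h1, rfl⟩; exact ⟨a, h1, rfl, rfl⟩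
    · rintro ⟨u, hu, rfl, rfl⟩; exact ⟨hu, rfl⟩
  rw [h, Finset.card_image_of_injective]
  intro a b hab
  exact (Prod.mk.injEq _ _ _ _ ▸ hab).1

lemma card_arcs [Fintype V] (A : V → V → Prop) [DecidableRel A]
    [Fintype (underlying A).edgeSet]
    (hasym : ∀ u v, A u v → ¬ A v u) :
    (Finset.univ.filter fun p : V × V => A p.1 p.2).card
      = (underlying A).edgeFinset.card := by
  classical
  refine Finset.card_bij (fun p _ => s(p.1, p.2)) ?_ ?_ ?_
  · rintro ⟨a, b⟩ hp
    simp only [Finset.mem_filter, Finset.mem_univ, true_and] at hp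
    rw [SimpleGraph.mem_edgeFinset, SimpleGraph.mem_edgeSet]
    refine ⟨fun h => ?_, Or.inl hp⟩
    have h' : a = b := h
    subst h'
    exact hasym a a hp hp
  · rintro ⟨a, b⟩ ha ⟨c, d⟩ hc h
    simp only [Finset.mem_filter, Finset.mem_univ, true_and] at ha hc
    rw [Sym2.eq_iff] at h
    rcases h with ⟨rfl, rfl⟩ | ⟨rfl, rfl⟩
    · rfl
    · exact absurd hc (hasym _ _ ha)
  · intro e he
    rw [SimpleGraph.mem_edgeFinset] at he
    induction e with
    | _ u v =>
      rw [SimpleGraph.mem_edgeSet] at he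
      obtain ⟨hne, h | h⟩ := (id he : u ≠ v ∧ (A u v ∨ A v u))
      · exact ⟨(u, v), by simp [h], rfl⟩
      · exact ⟨(v, u), by simp [h], Sym2.eq_swap⟩

lemma handshake [Fintype V] (A : V → V → Prop) [DecidableRel A]
    (hasym : ∀ u v, A u v → ¬ A v u)
    (htree : (underlying A).IsTree) :
    (∑ v, (inDeg A v + outDeg A v)) + 2 = 2 * Fintype.card V ∧
    (∑ v, outDeg A v) + 1 = Fintype.card V := by
  classical
  have hcard := htree.card_edgeFinset
  have ho := sum_outDeg A
  have hi := sum_inDeg A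
  have harcs := card_arcs A hasym
  constructor
  · rw [Finset.sum_add_distrib, hi, ho, harcs]
    omega
  · rw [ho, harcs]; omega


/-- A stack-free arboreal network on a 3-element set `X` has
one or two roots; with one root it is a rooted triplet on `X`, and with two
roots it is banyan. -/
theorem card_three_case
    {X V : Type} [Finite X] (hX : Nat.card X = 3)
    (N : PreNetwork X V) (hN : InA N) :
    ({v | IsRoot N.Arc v}.ncard = 1 ∨ {v | IsRoot N.Arc v}.ncard = 2) ∧
    ({v | IsRoot N.Arc v}.ncard = 1 →
      ∃ x y z : X, x ≠ y ∧ x ≠ z ∧ y ≠ z ∧ IsRootedTriplet N x y z) ∧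
    ({v | IsRoot N.Arc v}.ncard = 2 → Banyan N) := by
  classical
  obtain ⟨⟨hfinV, hdag, hconn, hinj, hleafiff, hclassify⟩, harb, _hsf⟩ := hN
  haveI : Finite V := hfinV
  haveI : Fintype V := Fintype.ofFinite V
  haveI : Fintype X := Fintype.ofFinite X
  -- basic digraph facts
  have hirr : ∀ v, ¬ N.Arc v v := fun v h => hdag v (Relation.TransGen.single h)
  have hasym : ∀ u v, N.Arc u v → ¬ N.Arc v u := fun u v h h' =>
    hdag u (Relation.TransGen.head h (Relation.TransGen.single h'))
  have htree : (underlying N.Arc).IsTree := ⟨hconn, harb⟩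
  obtain ⟨hhs, hout_sum⟩ := handshake N.Arc hasym htree
  have hout_pos : ∀ u v, N.Arc u v → outDeg N.Arc u ≠ 0 := by
    intro u v h h0
    rw [outDeg, Set.ncard_eq_zero (Set.toFinite _)] at h0
    have hv : v ∈ {w | N.Arc u w} := h
    rw [h0] at hv
    exact hv
  have hin_pos : ∀ u v, N.Arc u v → inDeg N.Arc v ≠ 0 := by
    intro u v h h0
    rw [inDeg, Set.ncard_eq_zero (Set.toFinite _)] at h0
    have hv : u ∈ {w | N.Arc w v} := h
    rw [h0] at hv
    exact hv
  have hroot_iff : ∀ v, IsRoot N.Arc v ↔ (inDeg N.Arc v = 0 ∧ outDeg N.Arc v = 2) := by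
    intro v
    constructor
    · rintro ⟨h0, h2⟩
      rcases hclassify v with h | h | h | h
      · exact h
      · exact absurd h.1 (by omega)
      · exact absurd h.2 (by omega)
      · exact absurd h.1 (by omega)
    · rintro ⟨h0, h2⟩
      exact ⟨h0, by omega⟩
  have hparent : ∀ v, inDeg N.Arc v = 1 → ∃ p, N.Arc p v ∧ ∀ q, N.Arc q v → q = p := by
    intro v h
    obtain ⟨p, hp⟩ := Set.ncard_eq_one.mp h
    refine ⟨p, ?_, ?_⟩
    · have : p ∈ {u | N.Arc u v} := by rw [hp]; exact rfl
      exact this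
    · intro q hq
      have hq' : q ∈ {u | N.Arc u v} := hq
      rw [hp] at hq'
      exact hq'
  -- the three classes
  set R : Finset V := Finset.univ.filter (fun v => IsRoot N.Arc v) with hRdef
  set L : Finset V := Finset.univ.filter (fun v => IsLeafVtx N.Arc v) with hLdef
  set B : Finset V := Finset.univ.filter
      (fun v => IsHybrid N.Arc v ∨ IsTreeVtx N.Arc v) with hBdef
  have hmemR : ∀ v, v ∈ R ↔ IsRoot N.Arc v := by
    intro v; rw [hRdef]; simp
  have hmemL : ∀ v, v ∈ L ↔ IsLeafVtx N.Arc v := by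
    intro v; rw [hLdef]; simp
  have hmemB : ∀ v, v ∈ B ↔ (IsHybrid N.Arc v ∨ IsTreeVtx N.Arc v) := by
    intro v; rw [hBdef]; simp
  have hdisjRL : Disjoint R L := by
    rw [Finset.disjoint_left]
    intro a haR haL
    have h1 := ((hmemR a).mp haR).1
    have h2 := ((hmemL a).mp haL).1
    omega
  have hdisjRLB : Disjoint (R ∪ L) B := by
    rw [Finset.disjoint_left]
    intro a ha haB
    rcases (hmemB a).mp haB with hh | ht
    · rcases Finset.mem_union.mp ha with h | h
      · have := ((hmemR a).mp h).1; have := hh.2; omega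
      · have := ((hmemL a).mp h).2; have := hh.1; omega
    · rcases Finset.mem_union.mp ha with h | h
      · have := ((hmemR a).mp h).1; have := ht.1; omega
      · have := ((hmemL a).mp h).2; have := ht.2; omega
  have hcover : R ∪ L ∪ B = Finset.univ := by
    ext v
    simp only [Finset.mem_union, Finset.mem_univ, iff_true]
    rcases hclassify v with h | h | h | h
    · exact Or.inl (Or.inl ((hmemR v).mpr ⟨h.1, by omega⟩))
    · exact Or.inl (Or.inr ((hmemL v).mpr h))
    · exact Or.inr ((hmemB v).mpr (Or.inl h))
    · exact Or.inr ((hmemB v).mpr (Or.inr h))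
  have hLcard : L.card = 3 := by
    have himg : L = Finset.univ.image N.leaf := by
      ext v
      rw [hmemL, hleafiff v]
      simp [Set.mem_range, eq_comm]
    rw [himg, Finset.card_image_of_injective _ hinj, Finset.card_univ,
      ← Nat.card_eq_fintype_card, hX]
  have hcardV : Fintype.card V = R.card + L.card + B.card := by
    rw [← Finset.card_univ, ← hcover, Finset.card_union_of_disjoint hdisjRLB,
      Finset.card_union_of_disjoint hdisjRL]
  -- sums over the classes
  have hsum_split : ∀ f : V → ℕ,
      ∑ v, f v = (∑ v ∈ R, f v) + (∑ v ∈ L, f v) + (∑ v ∈ B, f v) := by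
    intro f
    rw [← hcover, Finset.sum_union hdisjRLB, Finset.sum_union hdisjRL]
  have hsumR : ∑ v ∈ R, (inDeg N.Arc v + outDeg N.Arc v) = R.card * 2 := by
    refine Finset.sum_const_nat fun v hv => ?_
    obtain ⟨h0, h2⟩ := (hroot_iff v).mp ((hmemR v).mp hv)
    omega
  have hsumL : ∑ v ∈ L, (inDeg N.Arc v + outDeg N.Arc v) = L.card * 1 := by
    refine Finset.sum_const_nat fun v hv => ?_
    obtain ⟨h0, h2⟩ := (hmemL v).mp hv
    omega
  have hsumB_ge : B.card * 3 ≤ ∑ v ∈ B, (inDeg N.Arc v + outDeg N.Arc v) := by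
    have := Finset.card_nsmul_le_sum B (fun v => inDeg N.Arc v + outDeg N.Arc v) 3 ?_
    · simpa using this
    · intro v hv
      show 3 ≤ inDeg N.Arc v + outDeg N.Arc v
      rcases (hmemB v).mp hv with h | h
      · have := h.1; have := h.2; omega
      · have := h.1; have := h.2; omega
  -- exactly one branching vertex
  have hmain : B.card = 1 := by
    by_contra hne
    rcases Nat.lt_or_ge B.card 1 with h | h
    · have hB0 : B.card = 0 := by omega
      have hBe : B = ∅ := Finset.card_eq_zero.mp hB0
      rw [hsum_split (fun v => inDeg N.Arc v + outDeg N.Arc v), hsumR, hsumL, hLcard,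
        hcardV, hLcard, hB0, hBe, Finset.sum_empty] at hhs
      omega
    · have h2 : 2 ≤ B.card := by omega
      rw [hsum_split (fun v => inDeg N.Arc v + outDeg N.Arc v), hsumR, hsumL, hLcard,
        hcardV, hLcard] at hhs
      omega
  obtain ⟨b, hBb⟩ := Finset.card_eq_one.mp hmain
  have hbmem : IsHybrid N.Arc b ∨ IsTreeVtx N.Arc b :=
    (hmemB b).mp (hBb ▸ Finset.mem_singleton_self b)
  have hbdeg : inDeg N.Arc b + outDeg N.Arc b = 3 := by
    have hs := hhs
    rw [hsum_split (fun v => inDeg N.Arc v + outDeg N.Arc v), hsumR, hsumL, hLcard,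
      hcardV, hLcard, hmain, hBb, Finset.sum_singleton] at hs
    omega
  have hRout : R.card + outDeg N.Arc b = 3 := by
    have hs := hout_sum
    rw [hsum_split (fun v => outDeg N.Arc v), hBb, Finset.sum_singleton] at hs
    have hsR : ∑ v ∈ R, outDeg N.Arc v = R.card * 2 := by
      refine Finset.sum_const_nat fun v hv => ((hroot_iff v).mp ((hmemR v).mp hv)).2
    have hsL : ∑ v ∈ L, outDeg N.Arc v = 0 := by
      refine Finset.sum_eq_zero fun v hv => ((hmemL v).mp hv).2
    rw [hsR, hsL, hcardV, hLcard, hmain] at hs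
    omega
  have hncard : {v | IsRoot N.Arc v}.ncard = R.card := by
    rw [ncard_setOf_eq, hRdef]
  have hclass3 : ∀ v : V, IsRoot N.Arc v ∨ IsLeafVtx N.Arc v ∨ v = b := by
    intro v
    rcases hclassify v with h | h | h | h
    · exact Or.inl ⟨h.1, by omega⟩
    · exact Or.inr (Or.inl h)
    · exact Or.inr (Or.inr (Finset.mem_singleton.mp
        (hBb ▸ (hmemB v).mpr (Or.inl h))))
    · exact Or.inr (Or.inr (Finset.mem_singleton.mp
        (hBb ▸ (hmemB v).mpr (Or.inr h))))
  rcases hbmem with hhyb | htv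
  · -- b is a hybrid: two roots, banyan
    have hRc : R.card = 2 := by have := hhyb.1; omega
    refine ⟨Or.inr (by rw [hncard, hRc]), ?_, ?_⟩
    · intro h1
      rw [hncard, hRc] at h1
      omega
    · intro _
      constructor
      · intro h p hh hp
        have hhb : h = b := by
          rcases hclass3 h with hr | hl | he
          · have := hr.1; have := hh.2; omega
          · have := hl.2; have := hh.1; omega
          · exact he
        rcases hclass3 p with hr | hl | he
        · exact hr
        · exact absurd hl.2 (hout_pos p h hp)
        · rw [he, hhb] at hp
          exact absurd hp (hirr b)
      · intro x
        have hlx : IsLeafVtx N.Arc (N.leaf x) := (hleafiff _).mpr ⟨x, rfl⟩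
        obtain ⟨p, hp, -⟩ := hparent _ hlx.1
        refine ⟨p, hp, ?_⟩
        rcases hclass3 p with hr | hl | he
        · exact Or.inl hr
        · exact absurd hl.2 (hout_pos p _ hp)
        · exact Or.inr (he ▸ hhyb)
  · -- b is a tree vertex: one root, rooted triplet
    have hin1 : inDeg N.Arc b = 1 := htv.1
    have hout2 : outDeg N.Arc b = 2 := by omega
    have hRc : R.card = 1 := by omega
    obtain ⟨r, hRr⟩ := Finset.card_eq_one.mp hRc
    have hrroot : IsRoot N.Arc r := (hmemR r).mp (hRr ▸ Finset.mem_singleton_self r)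
    have hroot_eq : ∀ v, IsRoot N.Arc v → v = r := by
      intro v hv
      exact Finset.mem_singleton.mp (hRr ▸ (hmemR v).mpr hv)
    have hb_ne_r : b ≠ r := by
      intro h
      have := hrroot.1
      rw [← h] at this
      omega
    -- the unique parent of b is r
    have harb' : N.Arc r b := by
      obtain ⟨p, hp, hpu⟩ := hparent b hin1
      rcases hclass3 p with hr | hl | he
      · rwa [← hroot_eq p hr]
      · exact absurd hl.2 (hout_pos p b hp)
      · exact absurd (he ▸ hp) (hirr b)
    -- the two children of b
    obtain ⟨x', y', hxy', hsetb⟩ := Set.ncard_eq_two.mp hout2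
    have hbx : N.Arc b x' := by
      have : x' ∈ {u | N.Arc b u} := by rw [hsetb]; exact Set.mem_insert _ _
      exact this
    have hby : N.Arc b y' := by
      have : y' ∈ {u | N.Arc b u} := by
        rw [hsetb]; exact Set.mem_insert_of_mem _ rfl
      exact this
    have hleafchild : ∀ c, N.Arc b c → IsLeafVtx N.Arc c := by
      intro c hc
      rcases hclass3 c with hr | hl | he
      · exact absurd hr.1 (hin_pos b c hc)
      · exact hl
      · exact absurd (he ▸ hc) (hirr b)
    -- the two children of r
    have hrout2 : outDeg N.Arc r = 2 := ((hroot_iff r).mp hrroot).2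
    obtain ⟨c, d, hcd, hsetr⟩ := Set.ncard_eq_two.mp hrout2
    have hbmem' : b = c ∨ b = d := by
      have : b ∈ {u | N.Arc r u} := harb'
      rw [hsetr] at this
      simpa using this
    obtain ⟨z', hz'ne, hsetr'⟩ : ∃ z', z' ≠ b ∧ {u | N.Arc r u} = {b, z'} := by
      rcases hbmem' with hbc | hbd
      · exact ⟨d, fun h => hcd ((h.trans hbc).symm), by rw [hsetr, ← hbc]⟩
      · exact ⟨c, fun h => hcd (h.trans hbd), by rw [hsetr, ← hbd, Set.pair_comm]⟩
    have hrz : N.Arc r z' := by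
      have : z' ∈ {u | N.Arc r u} := by
        rw [hsetr']; exact Set.mem_insert_of_mem _ rfl
      exact this
    have hz'leaf : IsLeafVtx N.Arc z' := by
      rcases hclass3 z' with hr | hl | he
      · exact absurd hr.1 (hin_pos r z' hrz)
      · exact hl
      · exact absurd he hz'ne
    have hz'x : z' ≠ x' := by
      intro h
      obtain ⟨p, hp, hpu⟩ := hparent z' hz'leaf.1
      have h1 : r = p := hpu r hrz
      have h2 : b = p := hpu b (h ▸ hbx)
      exact hb_ne_r (h2.trans h1.symm)
    have hz'y : z' ≠ y' := by
      intro h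
      obtain ⟨p, hp, hpu⟩ := hparent z' hz'leaf.1
      have h1 : r = p := hpu r hrz
      have h2 : b = p := hpu b (h ▸ hby)
      exact hb_ne_r (h2.trans h1.symm)
    -- labels
    obtain ⟨x, hx⟩ := (hleafiff x').mp (hleafchild x' hbx)
    obtain ⟨y, hy⟩ := (hleafiff y').mp (hleafchild y' hby)
    obtain ⟨z, hz⟩ := (hleafiff z').mp hz'leaf
    have hxyX : x ≠ y := fun h => hxy' (hx ▸ hy ▸ congrArg N.leaf h)
    have hxzX : x ≠ z := fun h => hz'x ((hz ▸ hx ▸ congrArg N.leaf h).symm)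
    have hyzX : y ≠ z := fun h => hz'y ((hz ▸ hy ▸ congrArg N.leaf h).symm)
    have htrip : IsRootedTriplet N x y z := by
      refine ⟨r, b, ?_, ?_⟩
      · intro a c
        constructor
        · intro h
          rcases hclass3 a with hr | hl | he
          · have ha : a = r := hroot_eq a hr
            subst ha
            have : c ∈ {u | N.Arc a u} := h
            rw [hsetr'] at this
            rcases this with rfl | hc
            · exact Or.inl ⟨rfl, rfl⟩
            · exact Or.inr (Or.inl ⟨rfl, by rw [hz]; exact hc.symm ▸ rfl⟩)
          · exact absurd hl.2 (hout_pos a c h)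
          · subst he
            have : c ∈ {u | N.Arc a u} := h
            rw [hsetb] at this
            rcases this with rfl | hc
            · exact Or.inr (Or.inr (Or.inl ⟨rfl, hx.symm⟩))
            · have hc' : c = y' := hc
              exact Or.inr (Or.inr (Or.inr ⟨rfl, hc' ▸ hy.symm⟩))
        · rintro (⟨rfl, rfl⟩ | ⟨rfl, rfl⟩ | ⟨rfl, rfl⟩ | ⟨rfl, rfl⟩)
          · exact harb'
          · rw [hz]; exact hrz
          · rw [hx]; exact hbx
          · rw [hy]; exact hby
      · intro v
        rcases hclass3 v with hr | hl | he
        · exact Or.inl (hroot_eq v hr)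
        · exact Or.inr (Or.inr ((hleafiff v).mp hl))
        · exact Or.inr (Or.inl he)
    refine ⟨Or.inl (by rw [hncard, hRc]), fun _ => ⟨x, y, z, hxyX, hxzX, hyzX, htrip⟩, ?_⟩
    intro h2
    rw [hncard, hRc] at h2
    omega

end ArbNet
end

section
/- There exist a set X with |X| = 4 and two stack-free arboreal networks N, N' ∈ A(X) such that N is not isomorphic to N', R(N) = R(N') ≠ ∅, and D(N) ≠ D(N'). Consequently, stack-free arboreal networks are not, in general, encoded by their induced triplet systems alone within A(X). -/
/-!
Common definitions for formalizing arboreal networks.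

A (multi-rooted) network is modelled as a `PreNetwork`: a directed graph (arc
relation) on a vertex type `V` together with an embedding of the label set `X`
onto the leaves.  `IsNetwork` collects the m-network axioms.  Since the
underlying graph `U(N)` of an m-network is connected and the degree-1 vertices
of `U(N)` are exactly the leaves, the suppressed graph `U(N)⁻` is an unrooted
phylogenetic tree on `X` if and only if `U(N)` is acyclic; we use this as the
definition of `IsArboreal`.
-/

namespace ArbNet

variable {X V W : Type}

/-! ### Auxiliary material for the counterexample -/

private lemma rtg_iff {V : Type} (A f : V → V → Bool) (g : V → ℕ)
    (hrefl : ∀ v, f v v = true)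
    (hclosed : ∀ a b c, f a b = true → A b c = true → f a c = true)
    (hstep : ∀ u v, f u v = true → u = v ∨ ∃ w, A u w = true ∧ f w v = true)
    (hmono : ∀ u w, A u w = true → g u < g w)
    (hbnd : ∀ u v, f u v = true → g u ≤ g v)
    (u v : V) :
    Above (fun a b => A a b = true) u v ↔ f u v = true := by
  constructor
  · intro h
    induction h with
    | refl => exact hrefl u
    | tail _ h2 ih => exact hclosed _ _ _ ih h2
  · intro h
    have H : ∀ n u, g v - g u ≤ n → f u v = true →
        Relation.ReflTransGen (fun a b => A a b = true) u v := by
      intro n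
      induction n with
      | zero =>
        intro u hle hf
        rcases hstep u v hf with rfl | ⟨w, hA, hw⟩
        · exact Relation.ReflTransGen.refl
        · have h1 := hmono u w hA
          have h2 := hbnd w v hw
          exact absurd hle (by omega)
      | succ n ih =>
        intro u hle hf
        rcases hstep u v hf with rfl | ⟨w, hA, hw⟩
        · exact Relation.ReflTransGen.refl
        · have h1 := hmono u w hA
          have h2 := hbnd w v hw
          exact Relation.ReflTransGen.head hA (ih w (by omega) hw)
    exact H _ u le_rfl h

private lemma noCycle {V : Type} (A : V → V → Bool) (g : V → ℕ)
    (hmono : ∀ u w, A u w = true → g u < g w) :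
    ∀ v, ¬ Relation.TransGen (fun a b => A a b = true) v v := by
  have key : ∀ u v, Relation.TransGen (fun a b => A a b = true) u v → g u < g v := by
    intro u v h
    induction h with
    | single h => exact hmono _ _ h
    | tail _ h2 ih => exact ih.trans (hmono _ _ h2)
  exact fun v h => absurd (key v v h) (lt_irrefl _)

private lemma no_rtg {V : Type} {R : V → V → Prop} (S : V → Bool)
    (h : ∀ a b, R a b → S a = true → S b = true) {u v : V}
    (hu : S u = true) (hv : S v ≠ true) : ¬ Relation.ReflTransGen R u v := by
  intro hr
  refine hv ?_
  clear hv
  induction hr with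
  | refl => exact hu
  | tail _ h2 ih => exact h _ _ h2 ih

private lemma inDeg_eq {n : ℕ} (A : Fin n → Fin n → Bool) (v : Fin n) :
    inDeg (fun a b => A a b = true) v = (Finset.univ.filter fun u => A u v = true).card := by
  unfold inDeg
  rw [show {u | A u v = true} =
      ((Finset.univ.filter fun u => A u v = true : Finset (Fin n)) : Set (Fin n)) from
    (by ext u; simp), Set.ncard_coe_finset]

private lemma outDeg_eq {n : ℕ} (A : Fin n → Fin n → Bool) (v : Fin n) :
    outDeg (fun a b => A a b = true) v = (Finset.univ.filter fun u => A v u = true).card := by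
  unfold outDeg
  rw [show {u | A v u = true} =
      ((Finset.univ.filter fun u => A v u = true : Finset (Fin n)) : Set (Fin n)) from
    (by ext u; simp), Set.ncard_coe_finset]

private lemma udeg_eq {X : Type} {n : ℕ} (N : PreNetwork X (Fin n)) (A : Fin n → Fin n → Bool)
    (hA : N.Arc = fun a b => A a b = true) (v : Fin n) :
    udeg N v = (Finset.univ.filter fun u => v ≠ u ∧ (A v u = true ∨ A u v = true)).card := by
  have h : (underlying N.Arc).neighborSet v =
      ((Finset.univ.filter fun u => v ≠ u ∧ (A v u = true ∨ A u v = true) : Finset (Fin n)) :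
        Set (Fin n)) := by
    ext u
    simp only [SimpleGraph.mem_neighborSet, Finset.coe_filter, Set.mem_setOf_eq,
      Finset.mem_univ, true_and, hA]
    exact Iff.rfl
  rw [udeg, h, Set.ncard_coe_finset]

/-- Arcs of the first network `N`. -/
private def arcN : Fin 8 → Fin 8 → Bool := fun u v =>
  decide ((u.val, v.val) ∈ [(4,6),(4,7),(6,0),(6,1),(5,7),(5,2),(7,3)])

/-- Arcs of the second network `N'`. -/
private def arcM : Fin 8 → Fin 8 → Bool := fun u v =>
  decide ((u.val, v.val) ∈ [(4,6),(4,3),(6,0),(6,7),(7,1),(5,7),(5,2)])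

private def leafF : Fin 4 → Fin 8 := Fin.castLE (by omega)

private def aboveNf : Fin 8 → Fin 8 → Bool := fun u v =>
  decide ((u.val, v.val) ∈ [(0,0),(1,1),(2,2),(3,3),(4,4),(5,5),(6,6),(7,7),
    (4,0),(4,1),(4,3),(4,6),(4,7),(5,2),(5,3),(5,7),(6,0),(6,1),(7,3)])

private def aboveMf : Fin 8 → Fin 8 → Bool := fun u v =>
  decide ((u.val, v.val) ∈ [(0,0),(1,1),(2,2),(3,3),(4,4),(5,5),(6,6),(7,7),
    (4,0),(4,1),(4,3),(4,6),(4,7),(5,1),(5,2),(5,7),(6,0),(6,1),(6,7),(7,1)])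

private def rkN : Fin 8 → ℕ := ![2,2,2,2,0,0,1,1]
private def rkM : Fin 8 → ℕ := ![2,3,1,1,0,0,1,2]

private def compN : Fin 8 → Fin 8 → Fin 8 → Bool := fun v w a =>
  decide ((v.val, w.val, a.val) ∈
    [(0,6,0),(1,6,1),(2,5,2),(3,7,3),(4,6,2),(4,6,3),(4,6,4),(4,6,5),(4,6,7),
     (4,7,0),(4,7,1),(4,7,4),(4,7,6),(5,2,0),(5,2,1),(5,2,3),(5,2,4),(5,2,5),
     (5,2,6),(5,2,7),(5,7,2),(5,7,5),(6,0,1),(6,0,2),(6,0,3),(6,0,4),(6,0,5),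
     (6,0,6),(6,0,7),(6,1,0),(6,1,2),(6,1,3),(6,1,4),(6,1,5),(6,1,6),(6,1,7),
     (6,4,0),(6,4,1),(6,4,6),(7,3,0),(7,3,1),(7,3,2),(7,3,4),(7,3,5),(7,3,6),
     (7,3,7),(7,4,2),(7,4,3),(7,4,5),(7,4,7),(7,5,0),(7,5,1),(7,5,3),(7,5,4),
     (7,5,6),(7,5,7)])

private def compM : Fin 8 → Fin 8 → Fin 8 → Bool := fun v w a =>
  decide ((v.val, w.val, a.val) ∈
    [(0,6,0),(1,7,1),(2,5,2),(3,4,3),(4,3,0),(4,3,1),(4,3,2),(4,3,4),(4,3,5),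
     (4,3,6),(4,3,7),(4,6,3),(4,6,4),(5,2,0),(5,2,1),(5,2,3),(5,2,4),(5,2,5),
     (5,2,6),(5,2,7),(5,7,2),(5,7,5),(6,0,1),(6,0,2),(6,0,3),(6,0,4),(6,0,5),
     (6,0,6),(6,0,7),(6,4,0),(6,4,1),(6,4,2),(6,4,5),(6,4,6),(6,4,7),(6,7,0),
     (6,7,3),(6,7,4),(6,7,6),(7,1,0),(7,1,2),(7,1,3),(7,1,4),(7,1,5),(7,1,6),
     (7,1,7),(7,5,0),(7,5,1),(7,5,3),(7,5,4),(7,5,6),(7,5,7),(7,6,1),(7,6,2),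
     (7,6,5),(7,6,7)])

private def Nnet : PreNetwork (Fin 4) (Fin 8) := ⟨fun u v => arcN u v = true, leafF⟩
private def Mnet : PreNetwork (Fin 4) (Fin 8) := ⟨fun u v => arcM u v = true, leafF⟩

private lemma hArcN : Nnet.Arc = fun a b => arcN a b = true := rfl
private lemma hArcM : Mnet.Arc = fun a b => arcM a b = true := rfl
private lemma hLeafN : Nnet.leaf = leafF := rfl
private lemma hLeafM : Mnet.leaf = leafF := rfl

private instance : DecidableRel (underlying Nnet.Arc).Adj := fun u v =>
  inferInstanceAs (Decidable (u ≠ v ∧ (arcN u v = true ∨ arcN v u = true)))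
private instance : DecidableRel (underlying Mnet.Arc).Adj := fun u v =>
  inferInstanceAs (Decidable (u ≠ v ∧ (arcM u v = true ∨ arcM v u = true)))

private lemma aboveN_iff : ∀ u v, Above Nnet.Arc u v ↔ aboveNf u v = true := fun u v =>
  rtg_iff arcN aboveNf rkN (by decide) (by decide) (by decide) (by decide) (by decide) u v

private lemma aboveM_iff : ∀ u v, Above Mnet.Arc u v ↔ aboveMf u v = true := fun u v =>
  rtg_iff arcM aboveMf rkM (by decide) (by decide) (by decide) (by decide) (by decide) u v

private lemma inDegN : ∀ v, inDeg Nnet.Arc v = (![1,1,1,1,0,0,1,2] : Fin 8 → ℕ) v := by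
  intro v
  rw [show inDeg Nnet.Arc v = inDeg (fun a b => arcN a b = true) v from rfl, inDeg_eq]
  revert v; decide

private lemma outDegN : ∀ v, outDeg Nnet.Arc v = (![0,0,0,0,2,2,2,1] : Fin 8 → ℕ) v := by
  intro v
  rw [show outDeg Nnet.Arc v = outDeg (fun a b => arcN a b = true) v from rfl, outDeg_eq]
  revert v; decide

private lemma inDegM : ∀ v, inDeg Mnet.Arc v = (![1,1,1,1,0,0,1,2] : Fin 8 → ℕ) v := by
  intro v
  rw [show inDeg Mnet.Arc v = inDeg (fun a b => arcM a b = true) v from rfl, inDeg_eq]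
  revert v; decide

private lemma outDegM : ∀ v, outDeg Mnet.Arc v = (![0,0,0,0,2,2,2,1] : Fin 8 → ℕ) v := by
  intro v
  rw [show outDeg Mnet.Arc v = outDeg (fun a b => arcM a b = true) v from rfl, outDeg_eq]
  revert v; decide

private lemma udegN : ∀ v, udeg Nnet v = (![1,1,1,1,2,2,3,3] : Fin 8 → ℕ) v := by
  intro v
  rw [udeg_eq Nnet arcN rfl]
  revert v; decide

private lemma udegM : ∀ v, udeg Mnet v = (![1,1,1,1,2,2,3,3] : Fin 8 → ℕ) v := by
  intro v
  rw [udeg_eq Mnet arcM rfl]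
  revert v; decide

private lemma connN : (underlying Nnet.Arc).Connected := by
  have hne : ∀ a b : Fin 8, arcN a b = true → a ≠ b := by decide
  have adj : ∀ a b : Fin 8, arcN a b = true → (underlying Nnet.Arc).Adj a b :=
    fun a b h => ⟨hne a b h, Or.inl h⟩
  have r : ∀ v : Fin 8, (underlying Nnet.Arc).Reachable 4 v := by
    intro v
    fin_cases v
    · exact ((adj 4 6 (by decide)).reachable).trans (adj 6 0 (by decide)).reachable
    · exact ((adj 4 6 (by decide)).reachable).trans (adj 6 1 (by decide)).reachable
    · exact ((adj 4 7 (by decide)).reachable).trans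
        (((adj 5 7 (by decide)).symm.reachable).trans (adj 5 2 (by decide)).reachable)
    · exact ((adj 4 7 (by decide)).reachable).trans (adj 7 3 (by decide)).reachable
    · exact SimpleGraph.Reachable.refl _
    · exact ((adj 4 7 (by decide)).reachable).trans ((adj 5 7 (by decide)).symm.reachable)
    · exact (adj 4 6 (by decide)).reachable
    · exact (adj 4 7 (by decide)).reachable
  rw [SimpleGraph.connected_iff]
  exact ⟨fun u v => (r u).symm.trans (r v), ⟨4⟩⟩

private lemma connM : (underlying Mnet.Arc).Connected := by
  have hne : ∀ a b : Fin 8, arcM a b = true → a ≠ b := by decide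
  have adj : ∀ a b : Fin 8, arcM a b = true → (underlying Mnet.Arc).Adj a b :=
    fun a b h => ⟨hne a b h, Or.inl h⟩
  have r : ∀ v : Fin 8, (underlying Mnet.Arc).Reachable 4 v := by
    intro v
    fin_cases v
    · exact ((adj 4 6 (by decide)).reachable).trans (adj 6 0 (by decide)).reachable
    · exact (((adj 4 6 (by decide)).reachable).trans (adj 6 7 (by decide)).reachable).trans
        (adj 7 1 (by decide)).reachable
    · exact (((adj 4 6 (by decide)).reachable).trans (adj 6 7 (by decide)).reachable).trans
        (((adj 5 7 (by decide)).symm.reachable).trans (adj 5 2 (by decide)).reachable)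
    · exact (adj 4 3 (by decide)).reachable
    · exact SimpleGraph.Reachable.refl _
    · exact (((adj 4 6 (by decide)).reachable).trans (adj 6 7 (by decide)).reachable).trans
        ((adj 5 7 (by decide)).symm.reachable)
    · exact (adj 4 6 (by decide)).reachable
    · exact ((adj 4 6 (by decide)).reachable).trans (adj 6 7 (by decide)).reachable
  rw [SimpleGraph.connected_iff]
  exact ⟨fun u v => (r u).symm.trans (r v), ⟨4⟩⟩

private lemma bridgeKeyN : ∀ v w a b : Fin 8,
    (v ≠ w ∧ (arcN v w = true ∨ arcN w v = true)) →
    (a ≠ b ∧ (arcN a b = true ∨ arcN b a = true)) →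
    ¬((a = v ∧ b = w) ∨ (a = w ∧ b = v)) →
    compN v w a = true → compN v w b = true := by decide

private lemma bridgeEndN : ∀ v w : Fin 8,
    (v ≠ w ∧ (arcN v w = true ∨ arcN w v = true)) →
    compN v w v = true ∧ compN v w w ≠ true := by decide

private lemma bridgeKeyM : ∀ v w a b : Fin 8,
    (v ≠ w ∧ (arcM v w = true ∨ arcM w v = true)) →
    (a ≠ b ∧ (arcM a b = true ∨ arcM b a = true)) →
    ¬((a = v ∧ b = w) ∨ (a = w ∧ b = v)) →
    compM v w a = true → compM v w b = true := by decide

private lemma bridgeEndM : ∀ v w : Fin 8,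
    (v ≠ w ∧ (arcM v w = true ∨ arcM w v = true)) →
    compM v w v = true ∧ compM v w w ≠ true := by decide

private lemma acycN : (underlying Nnet.Arc).IsAcyclic := by
  rw [SimpleGraph.isAcyclic_iff_forall_adj_isBridge]
  intro v w hadj
  rw [SimpleGraph.isBridge_iff]
  intro hr
  rw [SimpleGraph.reachable_iff_reflTransGen] at hr
  have hvw : v ≠ w ∧ (arcN v w = true ∨ arcN w v = true) := hadj
  refine no_rtg (R := ((underlying Nnet.Arc) \ SimpleGraph.fromEdgeSet {s(v,w)}).Adj)
      (fun a => compN v w a) ?_ (bridgeEndN v w hvw).1 (bridgeEndN v w hvw).2 hr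
  intro a b hab hSa
  rw [SimpleGraph.sdiff_adj, SimpleGraph.fromEdgeSet_adj, Set.mem_singleton_iff,
    Sym2.eq_iff] at hab
  obtain ⟨hab1, hab2⟩ := hab
  have hne : a ≠ b := hab1.1
  exact bridgeKeyN v w a b hvw hab1 (fun hc => hab2 ⟨hc, hne⟩) hSa

private lemma acycM : (underlying Mnet.Arc).IsAcyclic := by
  rw [SimpleGraph.isAcyclic_iff_forall_adj_isBridge]
  intro v w hadj
  rw [SimpleGraph.isBridge_iff]
  intro hr
  rw [SimpleGraph.reachable_iff_reflTransGen] at hr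
  have hvw : v ≠ w ∧ (arcM v w = true ∨ arcM w v = true) := hadj
  refine no_rtg (R := ((underlying Mnet.Arc) \ SimpleGraph.fromEdgeSet {s(v,w)}).Adj)
      (fun a => compM v w a) ?_ (bridgeEndM v w hvw).1 (bridgeEndM v w hvw).2 hr
  intro a b hab hSa
  rw [SimpleGraph.sdiff_adj, SimpleGraph.fromEdgeSet_adj, Set.mem_singleton_iff,
    Sym2.eq_iff] at hab
  obtain ⟨hab1, hab2⟩ := hab
  have hne : a ≠ b := hab1.1
  exact bridgeKeyM v w a b hvw hab1 (fun hc => hab2 ⟨hc, hne⟩) hSa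

private lemma netN : IsNetwork Nnet := by
  refine ⟨Finite.of_fintype _, noCycle arcN rkN (by decide), connN, by decide, ?_, ?_⟩
  · intro v
    simp only [IsLeafVtx, inDegN, outDegN, Set.mem_range, hLeafN]
    revert v; decide
  · intro v
    simp only [IsLeafVtx, IsHybrid, IsTreeVtx, inDegN, outDegN]
    revert v; decide

private lemma netM : IsNetwork Mnet := by
  refine ⟨Finite.of_fintype _, noCycle arcM rkM (by decide), connM, by decide, ?_, ?_⟩
  · intro v
    simp only [IsLeafVtx, inDegM, outDegM, Set.mem_range, hLeafM]
    revert v; decide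
  · intro v
    simp only [IsLeafVtx, IsHybrid, IsTreeVtx, inDegM, outDegM]
    revert v; decide

private lemma sfN : StackFree Nnet := by
  intro u v h hc
  rw [hArcN] at h
  revert h
  simp only [IsHybrid, inDegN, outDegN] at hc
  revert hc
  revert u v
  decide

private lemma sfM : StackFree Mnet := by
  intro u v h hc
  rw [hArcM] at h
  revert h
  simp only [IsHybrid, inDegM, outDegM] at hc
  revert hc
  revert u v
  decide

private lemma tripN : ∀ x y z : Fin 4, TripletRel Nnet x y z ↔
    (((x = 0 ∧ y = 1) ∨ (x = 1 ∧ y = 0)) ∧ z = 3) := by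
  simp only [TripletRel, IsRoot, inDegN, outDegN, aboveN_iff, hLeafN]
  decide

private lemma tripM : ∀ x y z : Fin 4, TripletRel Mnet x y z ↔
    (((x = 0 ∧ y = 1) ∨ (x = 1 ∧ y = 0)) ∧ z = 3) := by
  simp only [TripletRel, IsRoot, inDegM, outDegM, aboveM_iff, hLeafM]
  decide

private def udBool : Fin 8 → Bool := fun v => decide (v.val = 4 ∨ v.val = 5)

private lemma predN : ∀ v : Fin 8, decide (udeg Nnet v = 2) = udBool v := by
  intro v
  rw [udegN v]
  revert v; decide

private lemma predM : ∀ v : Fin 8, decide (udeg Mnet v = 2) = udBool v := by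
  intro v
  rw [udegM v]
  revert v; decide

private def wN : (underlying Nnet.Arc).Walk (Nnet.leaf 2) (Nnet.leaf 3) :=
  .cons (v := (5:Fin 8)) (by decide) (.cons (v := (7:Fin 8)) (by decide)
    (.cons (by decide) .nil))

private def wM : (underlying Mnet.Arc).Walk (Mnet.leaf 2) (Mnet.leaf 3) :=
  .cons (v := (5:Fin 8)) (by decide) (.cons (v := (7:Fin 8)) (by decide)
    (.cons (v := (6:Fin 8)) (by decide) (.cons (v := (4:Fin 8)) (by decide)
      (.cons (by decide) .nil))))

private lemma duetN23 : DuetRel Nnet 2 3 := by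
  refine ⟨by decide, ?_, wN, by rw [SimpleGraph.Walk.isPath_def]; decide, ?_⟩
  · simp only [tripN]
    decide
  · simp only [predN]
    decide

private lemma notDuetM23 : ¬ DuetRel Mnet 2 3 := by
  rintro ⟨-, -, w, hp, hc⟩
  have hu := acycM.path_unique ⟨w, hp⟩ ⟨wM, by rw [SimpleGraph.Walk.isPath_def]; decide⟩
  have hw : w = wM := congrArg Subtype.val hu
  subst hw
  simp only [predM] at hc
  exact absurd hc (by decide)

private lemma notDuetM32 : ¬ DuetRel Mnet 3 2 := by
  rintro ⟨-, -, w, hp, hc⟩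
  have hu := acycM.path_unique ⟨w, hp⟩ ⟨wM.reverse, by rw [SimpleGraph.Walk.isPath_def]; decide⟩
  have hw : w = wM.reverse := congrArg Subtype.val hu
  subst hw
  simp only [predM] at hc
  exact absurd hc (by decide)

/-- There are a 4-element set `X` and non-isomorphic
networks `N, N' ∈ 𝒜(X)` with the same nonempty triplet system but different
duet systems: stack-free arboreal networks are not encoded by their triplet
systems alone. -/

theorem not_encoded_by_triplets_alone :
    ∃ (X : Type), Nat.card X = 4 ∧
      ∃ (V W : Type) (N : PreNetwork X V) (N' : PreNetwork X W),
        InA N ∧ InA N' ∧ ¬ Isomorphic N N' ∧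
        tripletSys N = tripletSys N' ∧ tripletSys N ≠ ∅ ∧
        duetSys N ≠ duetSys N' := by
  refine ⟨Fin 4, by simp, Fin 8, Fin 8, Nnet, Mnet,
    ⟨netN, acycN, sfN⟩, ⟨netM, acycM, sfM⟩, ?_, ?_, ?_, ?_⟩
  · rintro ⟨e, harc, hleaf⟩
    have h0 : arcM (e 6) (leafF 0) = true := by
      have h := (harc 6 (Nnet.leaf 0)).mp (by exact (by decide : arcN 6 (leafF 0) = true))
      rwa [hleaf 0] at h
    have h1 : arcM (e 6) (leafF 1) = true := by
      have h := (harc 6 (Nnet.leaf 1)).mp (by exact (by decide : arcN 6 (leafF 1) = true))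
      rwa [hleaf 1] at h
    have hno : ∀ w : Fin 8, ¬(arcM w (leafF 0) = true ∧ arcM w (leafF 1) = true) := by decide
    exact hno _ ⟨h0, h1⟩
  · ext t
    simp only [tripletSys, Set.mem_setOf_eq]
    constructor
    · rintro ⟨x, y, z, h, rfl⟩
      exact ⟨x, y, z, (tripM x y z).mpr ((tripN x y z).mp h), rfl⟩
    · rintro ⟨x, y, z, h, rfl⟩
      exact ⟨x, y, z, (tripN x y z).mpr ((tripM x y z).mp h), rfl⟩
  · intro h
    have hmem : ((s((0:Fin 4), (1:Fin 4)), (3:Fin 4)) : Sym2 (Fin 4) × Fin 4) ∈ tripletSys Nnet :=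
      ⟨0, 1, 3, (tripN 0 1 3).mpr (by decide), rfl⟩
    rw [h] at hmem
    simp at hmem
  · intro h
    have hmem : (s((2:Fin 4), (3:Fin 4)) : Sym2 (Fin 4)) ∈ duetSys Nnet :=
      ⟨2, 3, duetN23, rfl⟩
    rw [h] at hmem
    obtain ⟨x, y, hxy, hs⟩ := hmem
    rw [Sym2.eq_iff] at hs
    rcases hs with ⟨rfl, rfl⟩ | ⟨rfl, rfl⟩
    · exact notDuetM23 hxy
    · exact notDuetM32 hxy

end ArbNet
end
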